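/- arXiv:2002.10976 — 2 statements merged into one kernel-verified Lean document; each statement's English description precedes it below -/
import Mathlib

section
/- Let f : X → X be a surjective endomorphism of a projective variety over a number field K such that f*H ∼ qH for some ample divisor H and integer q > 1 (f is polarized). Then the canonical height ĥ(x) = lim_n h_H(f^n(x))/q^n exists for all x ∈ X(K̄), differs from h_H by a bounded function, satisfies ĥ(f(x)) = q·ĥ(x), and ĥ(x) = 0 if and only if x is f-preperiodic. -/
open Filter Topology

/-- Call–Silverman canonical heights for a polarized endomorphism: if `f*H ∼ qH` with
`q > 1` an integer (encoded by `|h(f x) − q·h(x)| ≤ C₀`), then the canonical height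
`ĥ(x) = lim h(f^n x)/q^n` exists, differs boundedly from `h`, satisfies
`ĥ ∘ f = q·ĥ`, and vanishes exactly at the `f`-preperiodic points (those with finite
forward orbit).  Northcott is encoded via a degree function. -/
theorem stmt12 {X : Type*} (f : X → X) (hf : Function.Surjective f)
    (q : ℕ) (hq : 1 < q)
    (h : X → ℝ) (h1 : ∀ x, 1 ≤ h x)
    (deg : X → ℕ) (hdeg : ∀ x, deg (f x) ≤ deg x)
    (hnorthcott : ∀ (d : ℕ) (M : ℝ), ({x : X | deg x ≤ d ∧ h x ≤ M}).Finite)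
    (C₀ : ℝ) (hfunct : ∀ x, |h (f x) - (q : ℝ) * h x| ≤ C₀) :
    ∃ hhat : X → ℝ,
      (∀ x, Tendsto (fun n : ℕ => h (f^[n] x) / (q : ℝ) ^ n) atTop (𝓝 (hhat x))) ∧
      (∃ C : ℝ, ∀ x, |hhat x - h x| ≤ C) ∧
      (∀ x, hhat (f x) = (q : ℝ) * hhat x) ∧
      (∀ x, hhat x = 0 ↔ (Set.range fun n : ℕ => f^[n] x).Finite) := by
  have hq1 : (1:ℝ) < q := by exact_mod_cast hq
  have hq0 : (0:ℝ) < q := by linarith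
  set r : ℝ := 1 / q with hr
  have hr0 : 0 < r := by positivity
  have hr1 : r < 1 := by rw [hr, div_lt_one hq0]; exact hq1
  set a : X → ℕ → ℝ := fun x n => h (f^[n] x) / (q : ℝ) ^ n with ha
  have hstep : ∀ x n, dist (a x n) (a x (n + 1)) ≤ (C₀ / q) * r ^ n := by
    intro x n
    have hqn : ((q:ℝ) ^ n) ≠ 0 := by positivity
    have hq0' : (q:ℝ) ≠ 0 := ne_of_gt hq0
    have key := hfunct (f^[n] x)
    rw [abs_sub_comm] at key
    rw [Real.dist_eq]
    have e1 : a x n - a x (n+1)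
        = ((q:ℝ) * h (f^[n] x) - h (f (f^[n] x))) * (r ^ n / q) := by
      simp only [ha, Function.iterate_succ_apply', hr, div_pow, one_pow, pow_succ]
      field_simp
    have hpos : 0 ≤ r ^ n / (q:ℝ) := by positivity
    rw [e1, abs_mul, abs_of_nonneg hpos]
    calc |(q:ℝ) * h (f^[n] x) - h (f (f^[n] x))| * (r ^ n / q)
        ≤ C₀ * (r ^ n / q) := mul_le_mul_of_nonneg_right key hpos
      _ = (C₀ / q) * r ^ n := by ring
  have hcauchy : ∀ x, CauchySeq (a x) :=
    fun x => cauchySeq_of_le_geometric r (C₀ / q) hr1 (hstep x)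
  have hex : ∀ x, ∃ l : ℝ, Tendsto (a x) atTop (𝓝 l) :=
    fun x => cauchySeq_tendsto_of_complete (hcauchy x)
  choose hhat hlim using hex
  have hbd : ∀ x, |hhat x - h x| ≤ (C₀ / q) / (1 - r) := by
    intro x
    have := dist_le_of_le_geometric_of_tendsto₀ r (C₀/q) hr1 (hstep x) (hlim x)
    rw [dist_comm] at this
    have e0 : a x 0 = h x := by simp [ha]
    rw [Real.dist_eq, e0] at this
    exact this
  have hfe : ∀ x, hhat (f x) = (q : ℝ) * hhat x := by
    intro x
    have h1' : Tendsto (fun n => a x (n+1)) atTop (𝓝 (hhat x)) :=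
      (hlim x).comp (tendsto_add_atTop_nat 1)
    have h2' : Tendsto (fun n => (q:ℝ) * a x (n+1)) atTop (𝓝 ((q:ℝ) * hhat x)) :=
      h1'.const_mul _
    have heq : a (f x) = fun n => (q:ℝ) * a x (n+1) := by
      funext n
      simp only [ha, Function.iterate_succ_apply]
      rw [pow_succ]
      field_simp
    have h3' := hlim (f x)
    rw [heq] at h3'
    exact tendsto_nhds_unique h3' h2'
  refine ⟨hhat, hlim, ⟨(C₀ / q) / (1 - r), hbd⟩, hfe, fun x => ?_⟩
  constructor
  · intro h0
    have hiter : ∀ n, hhat (f^[n] x) = (q:ℝ) ^ n * hhat x := by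
      intro n
      induction n with
      | zero => simp
      | succ n ih =>
        rw [Function.iterate_succ_apply', hfe, ih, pow_succ]; ring
    have hdegn : ∀ n, deg (f^[n] x) ≤ deg x := by
      intro n
      induction n with
      | zero => simp
      | succ n ih => rw [Function.iterate_succ_apply']; exact (hdeg _).trans ih
    have hsub : (Set.range fun n : ℕ => f^[n] x) ⊆
        {y : X | deg y ≤ deg x ∧ h y ≤ (C₀ / q) / (1 - r)} := by
      rintro y ⟨n, rfl⟩
      refine ⟨hdegn n, ?_⟩
      have hb := hbd (f^[n] x)
      rw [hiter n, h0, mul_zero] at hb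
      have := (abs_le.mp hb).1
      linarith
    exact ((hnorthcott (deg x) ((C₀ / q) / (1 - r))).subset hsub)
  · intro hfin
    obtain ⟨M, hM⟩ : ∃ M : ℝ, ∀ n : ℕ, h (f^[n] x) ≤ M := by
      obtain ⟨M, hM⟩ := (hfin.image h).bddAbove
      exact ⟨M, fun n => hM ⟨f^[n] x, ⟨n, rfl⟩, rfl⟩⟩
    have htend0 : Tendsto (a x) atTop (𝓝 0) := by
      have hg : Tendsto (fun n : ℕ => M * r ^ n) atTop (𝓝 0) := by
        simpa using (tendsto_pow_atTop_nhds_zero_of_lt_one hr0.le hr1).const_mul M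
      refine squeeze_zero (fun n => ?_) (fun n => ?_) hg
      · have hp : (0:ℝ) < (q:ℝ) ^ n := by positivity
        have := h1 (f^[n] x)
        positivity
      · have hp : (0:ℝ) < (q:ℝ) ^ n := by positivity
        have e : M * r ^ n = M / (q:ℝ) ^ n := by
          rw [hr, div_pow, one_pow]; ring
        simp only [ha]
        rw [e]
        gcongr
        exact hM n
    exact tendsto_nhds_unique (hlim x) htend0
end

section
/- Let f : X → X be a polarized endomorphism of a projective variety over a number field K. Then for every d > 0, the set of f-preperiodic points of X defined over field extensions of K of degree at most d is finite. -/
open Filter Topology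

/-- For a polarized endomorphism (`|h(f x) − q·h(x)| ≤ C₀` with `q > 1`), the set of
`f`-preperiodic points of bounded degree is finite (Northcott encoded via a degree
function `deg` with `deg(f x) ≤ deg x`). -/
theorem stmt13 {X : Type*} (f : X → X) (hf : Function.Surjective f)
    (q : ℕ) (hq : 1 < q)
    (h : X → ℝ) (h1 : ∀ x, 1 ≤ h x)
    (deg : X → ℕ) (hdeg : ∀ x, deg (f x) ≤ deg x)
    (hnorthcott : ∀ (d : ℕ) (M : ℝ), ({x : X | deg x ≤ d ∧ h x ≤ M}).Finite)
    (C₀ : ℝ) (hfunct : ∀ x, |h (f x) - (q : ℝ) * h x| ≤ C₀) :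
    ∀ d : ℕ,
      ({x : X | deg x ≤ d ∧ (Set.range fun n : ℕ => f^[n] x).Finite}).Finite := by
  intro d
  have hq' : (1 : ℝ) < (q : ℝ) := by exact_mod_cast hq
  set C : ℝ := C₀ / ((q : ℝ) - 1) with hC
  apply (hnorthcott d C).subset
  rintro x ⟨hxd, horb⟩
  refine ⟨hxd, ?_⟩
  -- bound on heights along the orbit
  have hfin : ((h '' Set.range fun n : ℕ => f^[n] x)).Finite := horb.image h
  obtain ⟨B, hB⟩ := hfin.bddAbove
  have hBn : ∀ n : ℕ, h (f^[n] x) ≤ B := fun n =>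
    hB ⟨f^[n] x, ⟨n, rfl⟩, rfl⟩
  -- key growth estimate
  have key : ∀ n : ℕ, (q : ℝ) ^ n * (h x - C) ≤ h (f^[n] x) - C := by
    intro n
    induction n with
    | zero => simp
    | succ n ih =>
      have hlow : (q : ℝ) * h (f^[n] x) - C₀ ≤ h (f (f^[n] x)) := by
        have := abs_le.mp (hfunct (f^[n] x))
        linarith [this.1]
      have hne : (q : ℝ) - 1 ≠ 0 := by linarith
      have hCid : (q : ℝ) * C - C₀ = C := by
        rw [hC]
        field_simp
        ring
      have h2 : (q : ℝ) * (h (f^[n] x) - C) ≤ h (f^[n+1] x) - C := by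
        rw [Function.iterate_succ_apply']
        nlinarith
      calc (q : ℝ) ^ (n+1) * (h x - C) = (q : ℝ) * ((q:ℝ)^n * (h x - C)) := by ring
        _ ≤ (q : ℝ) * (h (f^[n] x) - C) := by
            apply mul_le_mul_of_nonneg_left ih (by positivity)
        _ ≤ h (f^[n+1] x) - C := h2
  by_contra hxC
  push_neg at hxC
  have hpos : 0 < h x - C := by linarith
  obtain ⟨n, hn⟩ := pow_unbounded_of_one_lt ((B - C) / (h x - C)) hq'
  have : (B - C) < (q : ℝ) ^ n * (h x - C) := by
    rwa [div_lt_iff₀ hpos] at hn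
  have := key n
  have := hBn n
  linarith
end
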